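/- arXiv:math/9411221 — 2 statements merged into one kernel-verified Lean document; each statement's English description precedes it below -/
import Mathlib

section
/- Let 𝒢 = 𝒢(G,H,S) be a strongly connected, non-complete Cayley coset digraph on n vertices with vertex connectivity κ, whose generators are distinct double-coset representatives, and suppose 𝒢 has an atom A with 2|A| ≤ n − κ. Then the atoms of 𝒢 partition the vertex set: every vertex of 𝒢 belongs to exactly one atom. Moreover, every automorphism of 𝒢 maps each atom onto an atom. -/
open Classical

/-- A digraph (given by its edge relation `E`) is strongly connected iff for every
ordered pair of vertices there is a directed path from the first to the second. -/
def SC {V : Type*} (E : V → V → Prop) : Prop :=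
  ∀ a b : V, Relation.ReflTransGen E a b

/-- The subdigraph induced on `A` is strongly connected. -/
def SCOn {V : Type*} (E : V → V → Prop) (A : Set V) : Prop :=
  ∀ a ∈ A, ∀ b ∈ A, Relation.ReflTransGen (fun x y => x ∈ A ∧ y ∈ A ∧ E x y) a b

/-- Out-neighborhood of a set of vertices. -/
def Nout {V : Type*} (E : V → V → Prop) (A : Set V) : Set V :=
  {x | x ∉ A ∧ ∃ y ∈ A, E y x}

/-- Vertex connectivity: the least cardinality of a set `T` of vertices whose removal
leaves a non-strongly-connected digraph; `Nat.card V - 1` if no such `T` exists. -/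
noncomputable def kappa {V : Type*} [Finite V] (E : V → V → Prop) : ℕ :=
  if ∃ T : Set V, ¬ SCOn E Tᶜ then
    sInf {m | ∃ T : Set V, T.ncard = m ∧ ¬ SCOn E Tᶜ}
  else Nat.card V - 1

/-- A part of a digraph. -/
def IsPart {V : Type*} (E : V → V → Prop) (A : Set V) : Prop :=
  A.Nonempty ∧ ((A ∪ Nout E A)ᶜ : Set V).Nonempty

/-- An atom: a part with `|N(A)| = κ` of minimum cardinality among such parts. -/
def IsAtomD {V : Type*} [Finite V] (E : V → V → Prop) (A : Set V) : Prop :=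
  IsPart E A ∧ (Nout E A).ncard = kappa E ∧
    ∀ B : Set V, IsPart E B → (Nout E B).ncard = kappa E → A.ncard ≤ B.ncard
/-- The double coset `K s K`. -/
def dcoset {G : Type*} [Group G] (K : Subgroup G) (s : G) : Set G :=
  {g | ∃ h₁ ∈ K, ∃ h₂ ∈ K, g = h₁ * s * h₂}

/-- Edge relation of the Cayley coset digraph `𝒢(G,H,S)` on the left cosets `G ⧸ H`:
there is an edge from `g₁H` to `g₂H` iff `g₁⁻¹g₂ ∈ HsH` for some `s ∈ S`
(equivalently, `g₁Hs ∩ g₂H ≠ ∅`). -/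
def cayleyRel {G : Type*} [Group G] (H : Subgroup G) (S : Set G) :
    G ⧸ H → G ⧸ H → Prop :=
  fun x y => ∃ s ∈ S, ∃ g₁ g₂ : G, (g₁ : G ⧸ H) = x ∧ (g₂ : G ⧸ H) = y ∧
    g₁⁻¹ * g₂ ∈ dcoset H s

/-- `d_s = |HsH/H|`, the number of left cosets of `H` contained in `HsH`. -/
noncomputable def dval {G : Type*} [Group G] (H : Subgroup G) (s : G) : ℕ :=
  ((QuotientGroup.mk '' dcoset H s : Set (G ⧸ H))).ncard


section AuxCombinatorics
variable {V : Type*} [Finite V] {E : V → V → Prop}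

omit [Finite V] in
lemma aux_not_scon_of_part {A : Set V} (hA : IsPart E A) : ¬ SCOn E (Nout E A)ᶜ := by
  obtain ⟨⟨a, ha⟩, ⟨b, hb⟩⟩ := hA
  intro h
  have haT : a ∈ (Nout E A)ᶜ := fun h' => h'.1 ha
  have hbT : b ∈ (Nout E A)ᶜ := fun h' => hb (Or.inr h')
  have key : ∀ c, Relation.ReflTransGen
      (fun x y => x ∈ (Nout E A)ᶜ ∧ y ∈ (Nout E A)ᶜ ∧ E x y) a c → c ∈ A := by
    intro c r
    induction r with
    | refl => exact ha
    | tail _ step ih =>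
      rcases step with ⟨_, hd, hE⟩
      by_contra hnd
      exact hd ⟨hnd, _, ih, hE⟩
  exact hb (Or.inl (key b (h a haT b hbT)))

lemma aux_kappa_le_part {A : Set V} (hA : IsPart E A) : kappa E ≤ (Nout E A).ncard := by
  rw [kappa, if_pos ⟨Nout E A, aux_not_scon_of_part hA⟩]
  exact Nat.sInf_le ⟨Nout E A, rfl, aux_not_scon_of_part hA⟩

lemma aux_nout_submod (A B : Set V) :
    (Nout E (A ∩ B)).ncard + (Nout E (A ∪ B)).ncard ≤
      (Nout E A).ncard + (Nout E B).ncard := by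
  have h1 : Nout E (A ∩ B) ∪ Nout E (A ∪ B) ⊆ Nout E A ∪ Nout E B := by
    rintro x (⟨hx, y, ⟨hyA, hyB⟩, hE⟩ | ⟨hx, y, hy, hE⟩)
    · by_cases hxA : x ∈ A
      · exact Or.inr ⟨fun hxB => hx ⟨hxA, hxB⟩, y, hyB, hE⟩
      · exact Or.inl ⟨hxA, y, hyA, hE⟩
    · rcases hy with hy | hy
      · exact Or.inl ⟨fun h => hx (Or.inl h), y, hy, hE⟩
      · exact Or.inr ⟨fun h => hx (Or.inr h), y, hy, hE⟩
  have h2 : Nout E (A ∩ B) ∩ Nout E (A ∪ B) ⊆ Nout E A ∩ Nout E B := by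
    rintro x ⟨⟨_, y, ⟨hyA, hyB⟩, hE⟩, hx2, _⟩
    exact ⟨⟨fun h => hx2 (Or.inl h), y, hyA, hE⟩, ⟨fun h => hx2 (Or.inr h), y, hyB, hE⟩⟩
  calc (Nout E (A ∩ B)).ncard + (Nout E (A ∪ B)).ncard
      = (Nout E (A ∩ B) ∪ Nout E (A ∪ B)).ncard + (Nout E (A ∩ B) ∩ Nout E (A ∪ B)).ncard :=
        (Set.ncard_union_add_ncard_inter _ _).symm
    _ ≤ (Nout E A ∪ Nout E B).ncard + (Nout E A ∩ Nout E B).ncard :=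
        Nat.add_le_add (Set.ncard_le_ncard h1 (Set.toFinite _))
          (Set.ncard_le_ncard h2 (Set.toFinite _))
    _ = (Nout E A).ncard + (Nout E B).ncard := Set.ncard_union_add_ncard_inter _ _

omit [Finite V] in
lemma aux_inter_part {A B : Set V} (hA : IsPart E A) (hne : (A ∩ B).Nonempty) :
    IsPart E (A ∩ B) := by
  refine ⟨hne, ?_⟩
  obtain ⟨c, hc⟩ := hA.2
  refine ⟨c, fun h => hc ?_⟩
  rcases h with h | ⟨hc2, y, ⟨hyA, _⟩, hE⟩
  · exact Or.inl h.1
  · by_cases hcA : c ∈ A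
    · exact Or.inl hcA
    · exact Or.inr ⟨hcA, y, hyA, hE⟩

lemma aux_atoms_eq {A B : Set V} (hA : IsAtomD E A) (hB : IsAtomD E B)
    (hsize : 2 * A.ncard ≤ Nat.card V - kappa E) (hne : (A ∩ B).Nonempty) : A = B := by
  have hcardAB : A.ncard = B.ncard :=
    le_antisymm (hA.2.2 B hB.1 hB.2.1) (hB.2.2 A hA.1 hA.2.1)
  have hApos : 1 ≤ A.ncard := (Set.ncard_pos (Set.toFinite _)).mpr hA.1.1
  have hipos : 1 ≤ (A ∩ B).ncard := (Set.ncard_pos (Set.toFinite _)).mpr hne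
  have hiP : IsPart E (A ∩ B) := aux_inter_part hA.1 hne
  have hqκ : kappa E ≤ (Nout E (A ∩ B)).ncard := aux_kappa_le_part hiP
  have hsub := aux_nout_submod (E := E) A B
  rw [hA.2.1, hB.2.1] at hsub
  have huicard : (A ∪ B).ncard + (A ∩ B).ncard = A.ncard + B.ncard :=
    Set.ncard_union_add_ncard_inter _ _
  have huP : IsPart E (A ∪ B) := by
    refine ⟨hA.1.1.mono Set.subset_union_left, ?_⟩
    have hXle : ((A ∪ B) ∪ Nout E (A ∪ B)).ncard ≤ (A ∪ B).ncard + (Nout E (A ∪ B)).ncard :=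
      Set.ncard_union_le _ _
    have hlt : ((A ∪ B) ∪ Nout E (A ∪ B)).ncard < Nat.card V := by omega
    rw [← Set.ncard_univ V] at hlt
    by_contra h
    rw [Set.not_nonempty_iff_eq_empty, ← Set.compl_univ, compl_inj_iff] at h
    rw [h] at hlt; omega
  have hpκ : kappa E ≤ (Nout E (A ∪ B)).ncard := aux_kappa_le_part huP
  have hq : (Nout E (A ∩ B)).ncard = kappa E := by omega
  have hAi : A.ncard ≤ (A ∩ B).ncard := hA.2.2 _ hiP hq
  have h1 : A ∩ B = A := Set.eq_of_subset_of_ncard_le Set.inter_subset_left hAi (Set.toFinite _)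
  have hBi : B.ncard ≤ (A ∩ B).ncard := hB.2.2 _ hiP hq
  have h2 : A ∩ B = B :=
    Set.eq_of_subset_of_ncard_le Set.inter_subset_right (by omega) (Set.toFinite _)
  exact h1 ▸ h2

end AuxCombinatorics

section AuxAut
variable {V : Type*} {E : V → V → Prop} (φ : V ≃ V)
  (hφ : ∀ x y, E x y ↔ E (φ x) (φ y))

include hφ in
lemma aux_nout_image (A : Set V) : Nout E (φ '' A) = φ '' Nout E A := by
  ext x
  obtain ⟨x, rfl⟩ := φ.surjective x
  constructor
  · rintro ⟨hx, y, ⟨y', hy', rfl⟩, hE⟩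
    exact ⟨x, ⟨fun h => hx ⟨x, h, rfl⟩, y', hy', (hφ y' x).mpr hE⟩, rfl⟩
  · rintro ⟨x', ⟨hx', y, hy, hE⟩, hxx⟩
    show φ x ∈ Nout E (φ '' A)
    rw [← hxx]
    exact ⟨fun ⟨a, ha, haa⟩ => hx' (φ.injective haa ▸ ha), φ y, ⟨y, hy, rfl⟩, (hφ y x').mp hE⟩

include hφ in
lemma aux_part_image {A : Set V} (hA : IsPart E A) : IsPart E (φ '' A) := by
  refine ⟨hA.1.image φ, ?_⟩
  rw [aux_nout_image φ hφ, ← Set.image_union, ← Set.image_compl_eq φ.bijective]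
  exact hA.2.image φ

include hφ in
lemma aux_atom_image [Finite V] {A : Set V} (hA : IsAtomD E A) : IsAtomD E (φ '' A) := by
  have hφ' : ∀ x y, E x y ↔ E (φ.symm x) (φ.symm y) := fun x y => by
    rw [hφ (φ.symm x) (φ.symm y), φ.apply_symm_apply, φ.apply_symm_apply]
  refine ⟨aux_part_image φ hφ hA.1, ?_, ?_⟩
  · rw [aux_nout_image φ hφ, Set.ncard_image_of_injective _ φ.injective]
    exact hA.2.1
  · intro B hB hBk
    have h1 : IsPart E (φ.symm '' B) := aux_part_image φ.symm hφ' hB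
    have h2 : (Nout E (φ.symm '' B)).ncard = kappa E := by
      rw [aux_nout_image φ.symm hφ', Set.ncard_image_of_injective _ φ.symm.injective]
      exact hBk
    calc (φ '' A).ncard = A.ncard := Set.ncard_image_of_injective _ φ.injective
      _ ≤ (φ.symm '' B).ncard := hA.2.2 _ h1 h2
      _ = B.ncard := Set.ncard_image_of_injective _ φ.symm.injective

end AuxAut

lemma aux_cayley_smul_mono {G : Type*} [Group G] (H : Subgroup G) (S : Set G) (g : G)
    {x y : G ⧸ H} (h : cayleyRel H S x y) : cayleyRel H S (g • x) (g • y) := by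
  obtain ⟨s, hs, g₁, g₂, rfl, rfl, hd⟩ := h
  refine ⟨s, hs, g * g₁, g * g₂, MulAction.Quotient.smul_mk H g g₁,
    MulAction.Quotient.smul_mk H g g₂, ?_⟩
  have : (g * g₁)⁻¹ * (g * g₂) = g₁⁻¹ * g₂ := by group
  rw [this]; exact hd

lemma aux_cayley_smul {G : Type*} [Group G] (H : Subgroup G) (S : Set G) (g : G)
    (x y : G ⧸ H) : cayleyRel H S x y ↔ cayleyRel H S (g • x) (g • y) := by
  constructor
  · exact aux_cayley_smul_mono H S g
  · intro h
    have := aux_cayley_smul_mono H S g⁻¹ h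
    simpa using this

/-- If the strongly connected, non-complete Cayley coset digraph `𝒢(G,H,S)` (with
generators distinct double-coset representatives) has an atom of size at most
`(n−κ)/2`, then its atoms partition the vertex set, and every automorphism maps
atoms onto atoms. -/
theorem stmt_6 {G : Type*} [Group G] [Finite G] (H : Subgroup G) (S : Set G)
    (hSH : ∀ s ∈ S, s ∉ H)
    (hdc : ∀ s ∈ S, ∀ t ∈ S, s ≠ t → dcoset H s ≠ dcoset H t)
    (hconn : SC (cayleyRel H S))
    (hnc : ∃ x y : G ⧸ H, x ≠ y ∧ ¬ cayleyRel H S x y)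
    (hatom : ∃ A : Set (G ⧸ H), IsAtomD (cayleyRel H S) A ∧
      2 * A.ncard ≤ Nat.card (G ⧸ H) - kappa (cayleyRel H S)) :
    (∀ v : G ⧸ H, ∃! A : Set (G ⧸ H), IsAtomD (cayleyRel H S) A ∧ v ∈ A) ∧
    (∀ φ : (G ⧸ H) ≃ (G ⧸ H),
      (∀ x y : G ⧸ H, cayleyRel H S x y ↔ cayleyRel H S (φ x) (φ y)) →
      ∀ A : Set (G ⧸ H), IsAtomD (cayleyRel H S) A →
        IsAtomD (cayleyRel H S) (φ '' A)) := by
  obtain ⟨A₀, hA₀, hsz⟩ := hatom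
  have hsame : ∀ B : Set (G ⧸ H), IsAtomD (cayleyRel H S) B → B.ncard = A₀.ncard :=
    fun B hB => le_antisymm (hB.2.2 A₀ hA₀.1 hA₀.2.1) (hA₀.2.2 B hB.1 hB.2.1)
  constructor
  · intro v
    obtain ⟨v₀, hv₀⟩ := hA₀.1.1
    obtain ⟨a, rfl⟩ := QuotientGroup.mk_surjective v₀
    obtain ⟨b, rfl⟩ := QuotientGroup.mk_surjective v
    set g : G := b * a⁻¹ with hg
    set φ : (G ⧸ H) ≃ (G ⧸ H) := MulAction.toPerm g with hφdef
    have hφ : ∀ x y : G ⧸ H, cayleyRel H S x y ↔ cayleyRel H S (φ x) (φ y) :=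
      fun x y => aux_cayley_smul H S g x y
    have himg : (b : G ⧸ H) ∈ φ '' A₀ := by
      refine ⟨(a : G ⧸ H), hv₀, ?_⟩
      show g • ((a : G) : G ⧸ H) = ((b : G) : G ⧸ H)
      rw [MulAction.Quotient.smul_mk H g a]
      congr 1
      rw [hg, smul_eq_mul, inv_mul_cancel_right]
    refine ⟨φ '' A₀, ⟨aux_atom_image φ hφ hA₀, himg⟩, ?_⟩
    rintro B ⟨hB, hvB⟩
    exact aux_atoms_eq hB (aux_atom_image φ hφ hA₀)
      (by rw [hsame B hB, ← hsame _ (aux_atom_image φ hφ hA₀)]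
          rwa [hsame _ (aux_atom_image φ hφ hA₀)])
      ⟨(b : G ⧸ H), hvB, himg⟩
  · intro φ hφ A hA
    exact aux_atom_image φ hφ hA
end

section
/- Let 𝒢 = 𝒢(G,H,S) be a strongly connected, non-complete Cayley coset digraph on n vertices with vertex connectivity κ, whose generators are distinct double-coset representatives, and suppose 𝒢 has an atom of size at most (n − κ)/2. Let A₀ be the atom containing the vertex H, let ⋃A₀ be the union of the cosets in A₀, let S₀ = S ∩ ⋃A₀ and S₁ = S ∖ S₀. Then |N(A₀)| equals the number of left cosets of H contained in (⋃A₀)S₁H, this number is at least max(|A₀|, d_{S₁}) where d_{S₁} = Σ_{s∈S₁} |HsH/H|, and |A₀| divides |N(A₀)|. -/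
open Classical

/-!
Translation by `g ∈ G` is an automorphism of the Cayley coset digraph, so it maps the atom `A₀`
to an atom. Two atoms of size at most `(n - κ)/2` that meet coincide (submodularity of
`|N(·)|`), hence `uA₀ = A₀` for every coset `uH ∈ A₀`, and `U = ⋃A₀` is a subgroup containing
`H`. Then `N(A₀)` consists of the cosets in `U S₁ H`; this set is a union of left cosets of `H`
and of right cosets of `U`, so `|U| = |A₀||H|` divides `|N(A₀)||H|`. The double cosets `HsH`,
`s ∈ S₁`, are pairwise disjoint and lie in `U S₁ H`, giving `d_{S₁} ≤ |N(A₀)|`.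
-/

open scoped Pointwise

section Digraph

variable {V : Type*} {E : V → V → Prop}

lemma disjoint_nout (A : Set V) : Disjoint A (Nout E A) :=
  Set.disjoint_left.2 fun _ hx hx' => hx'.1 hx

lemma ncard_union_nout [Finite V] (A : Set V) :
    (A ∪ Nout E A).ncard = A.ncard + (Nout E A).ncard :=
  Set.ncard_union_eq (disjoint_nout A)

lemma mem_union_nout {A : Set V} {x y : V} (hy : y ∈ A) (h : E y x) : x ∈ A ∪ Nout E A := by
  by_cases hx : x ∈ A
  exacts [Or.inl hx, Or.inr ⟨hx, y, hy, h⟩]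

lemma union_nout_mono {A B : Set V} (hAB : A ⊆ B) : A ∪ Nout E A ⊆ B ∪ Nout E B := by
  rintro x (hx | ⟨-, y, hy, h⟩)
  exacts [Or.inl (hAB hx), mem_union_nout (hAB hy) h]

lemma union_nout_union_subset (A B : Set V) :
    A ∪ B ∪ Nout E (A ∪ B) ⊆ (A ∪ Nout E A) ∪ (B ∪ Nout E B) := by
  rintro x ((hx | hx) | ⟨-, y, hy | hy, h⟩)
  exacts [Or.inl (Or.inl hx), Or.inr (Or.inl hx), Or.inl (mem_union_nout hy h),
    Or.inr (mem_union_nout hy h)]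

lemma ncard_nout_inter_add_ncard_nout_union_le [Finite V] (A B : Set V) :
    (Nout E (A ∩ B)).ncard + (Nout E (A ∪ B)).ncard ≤ (Nout E A).ncard + (Nout E B).ncard := by
  have hinter := Set.ncard_le_ncard (Set.subset_inter (union_nout_mono (E := E)
    (Set.inter_subset_left (t := B))) (union_nout_mono (Set.inter_subset_right (s := A))))
  have hunion := Set.ncard_le_ncard (union_nout_union_subset (E := E) A B)
  have := Set.ncard_union_add_ncard_inter (A ∪ Nout E A) (B ∪ Nout E B)
  have := Set.ncard_union_add_ncard_inter A B
  have := ncard_union_nout (E := E) A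
  have := ncard_union_nout (E := E) B
  have := ncard_union_nout (E := E) (A ∩ B)
  have := ncard_union_nout (E := E) (A ∪ B)
  omega

lemma mem_of_reflTransGen_avoiding_nout {R : V → V → Prop} {A : Set V}
    (hR : ∀ x y, R x y → E x y ∧ y ∉ Nout E A) {a b : V} (ha : a ∈ A)
    (h : Relation.ReflTransGen R a b) : b ∈ A := by
  induction h with
  | refl => exact ha
  | tail _ hxy ih => exact by_contra fun hb => (hR _ _ hxy).2 ⟨hb, _, ih, (hR _ _ hxy).1⟩

lemma IsPart.not_SCOn_compl_nout {A : Set V} (h : IsPart E A) : ¬ SCOn E (Nout E A)ᶜ := by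
  obtain ⟨⟨a, ha⟩, b, hb⟩ := h
  rw [Set.mem_compl_iff, Set.mem_union, not_or] at hb
  intro hSC
  exact hb.1 (mem_of_reflTransGen_avoiding_nout (fun _ _ h => ⟨h.2.2, h.2.1⟩) ha
    (hSC a (fun h => h.1 ha) b hb.2))

lemma IsPart.nout_nonempty (hSC : SC E) {A : Set V} (h : IsPart E A) : (Nout E A).Nonempty := by
  obtain ⟨⟨a, ha⟩, b, hb⟩ := h
  rw [Set.nonempty_iff_ne_empty]
  intro hN
  exact hb (Or.inl (mem_of_reflTransGen_avoiding_nout (fun _ _ h => ⟨h, by simp [hN]⟩) ha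
    (hSC a b)))

lemma IsPart.kappa_le [Finite V] {A : Set V} (h : IsPart E A) :
    kappa E ≤ (Nout E A).ncard := by
  rw [kappa, if_pos ⟨_, h.not_SCOn_compl_nout⟩]
  exact Nat.sInf_le ⟨_, rfl, h.not_SCOn_compl_nout⟩

lemma IsAtomD.ncard_eq [Finite V] {A B : Set V} (hA : IsAtomD E A) (hB : IsAtomD E B) :
    A.ncard = B.ncard :=
  le_antisymm (hA.2.2 B hB.1 hB.2.1) (hB.2.2 A hA.1 hA.2.1)

/-- Submodularity of `|N(·)|`: if `A ∪ B` is a part, then `A ∩ B` attains `κ`, so it is as large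
as the atoms `A` and `B`. The size bound is what makes `A ∪ B` a part. -/
lemma IsAtomD.eq_of_inter_nonempty [Finite V] {A B : Set V} (hA : IsAtomD E A)
    (hB : IsAtomD E B) (hsmall : 2 * A.ncard ≤ Nat.card V - kappa E)
    (hne : (A ∩ B).Nonempty) : A = B := by
  have hinter : IsPart E (A ∩ B) :=
    ⟨hne, hA.1.2.mono (Set.compl_subset_compl.2 (union_nout_mono Set.inter_subset_left))⟩
  have hsub := ncard_nout_inter_add_ncard_nout_union_le (E := E) A B
  have hAB := hA.ncard_eq hB
  have hcard := Set.ncard_union_add_ncard_inter A B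
  have hinter_pos : 0 < (A ∩ B).ncard := (Set.ncard_pos (Set.toFinite _)).2 hne
  have hunion : IsPart E (A ∪ B) := by
    refine ⟨hA.1.1.mono Set.subset_union_left, Set.nonempty_compl.2 fun huniv => ?_⟩
    have := congrArg Set.ncard huniv
    rw [Set.ncard_univ, ncard_union_nout] at this
    have := hinter.kappa_le
    have := hA.2.1
    have := hB.2.1
    omega
  have hkappa : (Nout E (A ∩ B)).ncard = kappa E := by
    have := hunion.kappa_le
    have := hinter.kappa_le
    have := hA.2.1
    have := hB.2.1
    omega
  rw [← Set.eq_of_subset_of_ncard_le Set.inter_subset_left (hA.2.2 _ hinter hkappa),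
    Set.eq_of_subset_of_ncard_le Set.inter_subset_right (hB.2.2 _ hinter hkappa)]

section Automorphism

variable (σ : V ≃ V) (hσ : ∀ x y, E (σ x) (σ y) ↔ E x y)
include hσ

lemma nout_image (A : Set V) : Nout E (σ '' A) = σ '' Nout E A := by
  ext x
  obtain ⟨x, rfl⟩ := σ.surjective x
  simp only [Nout, Set.mem_ofPred_eq, σ.injective.mem_set_image, Set.exists_mem_image, hσ]

lemma IsPart.image {A : Set V} (h : IsPart E A) : IsPart E (σ '' A) := by
  refine ⟨h.1.image σ, ?_⟩
  rw [nout_image σ hσ, ← Set.image_union, ← Set.image_compl_eq σ.bijective]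
  exact h.2.image σ

lemma IsAtomD.image [Finite V] {A : Set V} (h : IsAtomD E A) : IsAtomD E (σ '' A) := by
  have hσsymm : ∀ x y, E (σ.symm x) (σ.symm y) ↔ E x y := fun x y => by
    rw [← hσ, σ.apply_symm_apply, σ.apply_symm_apply]
  refine ⟨h.1.image σ hσ, ?_, fun B hB hBκ => ?_⟩
  · rw [nout_image σ hσ, Set.ncard_image_of_injective _ σ.injective, h.2.1]
  · have := h.2.2 _ (hB.image σ.symm hσsymm) (by
      rw [nout_image σ.symm hσsymm, Set.ncard_image_of_injective _ σ.symm.injective, hBκ])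
    rwa [Set.ncard_image_of_injective _ σ.injective,
      ← Set.ncard_image_of_injective B σ.symm.injective]

end Automorphism

end Digraph

lemma Submonoid.inv_mem_of_finite {G : Type*} [Group G] [Finite G] (M : Submonoid G) {x : G}
    (hx : x ∈ M) : x⁻¹ ∈ M := by
  obtain ⟨n, hn⟩ := (isOfFinOrder_of_finite x).mem_powers_iff_mem_zpowers.2
    (Subgroup.inv_mem _ (Subgroup.mem_zpowers x))
  exact hn ▸ pow_mem hx n

section CayleyCoset

variable {G : Type*} [Group G] {H K : Subgroup G} {S : Set G}

lemma cayleyRel_smul_iff (g : G) (x y : G ⧸ H) :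
    cayleyRel H S (g • x) (g • y) ↔ cayleyRel H S x y := by
  have key : ∀ (g : G) (x y : G ⧸ H), cayleyRel H S x y → cayleyRel H S (g • x) (g • y) := by
    rintro g _ _ ⟨s, hs, g₁, g₂, rfl, rfl, hd⟩
    exact ⟨s, hs, g * g₁, g * g₂, rfl, rfl, by rwa [mul_inv_rev, mul_assoc, inv_mul_cancel_left]⟩
  refine ⟨fun h => ?_, key g x y⟩
  simpa only [inv_smul_smul] using key g⁻¹ _ _ h

lemma le_of_mk_preimage_eq {A : Set (G ⧸ H)} (hA : QuotientGroup.mk ⁻¹' A = K) : H ≤ K := by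
  intro h hh
  have hh1 : ((h : G) : G ⧸ H) = ((1 : G) : G ⧸ H) := QuotientGroup.eq.2 (by simpa using hh)
  rw [← SetLike.mem_coe, ← hA, Set.mem_preimage, hh1, ← Set.mem_preimage, hA]
  exact K.one_mem

lemma nout_cayleyRel_eq_image {A : Set (G ⧸ H)} (hA : QuotientGroup.mk ⁻¹' A = K) :
    Nout (cayleyRel H S) A = QuotientGroup.mk '' ((K : Set G) * (S \ K) * (H : Set G)) := by
  have hmem : ∀ g : G, (g : G ⧸ H) ∈ A ↔ g ∈ K := fun g => Set.ext_iff.1 hA g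
  have hHK := le_of_mk_preimage_eq hA
  ext x
  obtain ⟨x, rfl⟩ := QuotientGroup.mk_surjective x
  constructor
  · rintro ⟨hx, y, hy, s, hs, g₁, g₂, rfl, hg₂, h₁, hh₁, h₂, hh₂, hprod⟩
    have hg₁ : g₁ * h₁ ∈ K := K.mul_mem ((hmem g₁).1 hy) (hHK hh₁)
    have hg₂eq : g₂ = g₁ * h₁ * s * h₂ := by rw [mul_assoc g₁, mul_assoc g₁, ← hprod]; group
    have hsK : s ∉ K := fun hsK => hx (hg₂ ▸ (hmem g₂).2 (hg₂eq ▸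
      K.mul_mem (K.mul_mem hg₁ hsK) (hHK hh₂)))
    exact ⟨g₂, hg₂eq ▸ Set.mul_mem_mul (Set.mul_mem_mul hg₁ ⟨hs, hsK⟩) hh₂, hg₂⟩
  · rintro ⟨_, ⟨_, ⟨u, hu, s, ⟨hs, hsK⟩, rfl⟩, h, hh, rfl⟩, hx⟩
    refine ⟨fun hA' => hsK ?_, u, (hmem u).2 hu, s, hs, u, u * s * h, rfl, hx, 1, H.one_mem, h, hh,
      by group⟩
    have := K.mul_mem (K.mul_mem (K.inv_mem hu) ((hmem _).1 (hx ▸ hA'))) (K.inv_mem (hHK hh))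
    simpa [mul_assoc] using this

variable [Finite G] {A : Set (G ⧸ H)}

lemma IsAtomD.mul_mem (hA : IsAtomD (cayleyRel H S) A)
    (hsmall : 2 * A.ncard ≤ Nat.card (G ⧸ H) - kappa (cayleyRel H S))
    (h1 : ((1 : G) : G ⧸ H) ∈ A) {u g : G} (hu : (u : G ⧸ H) ∈ A) (hg : (g : G ⧸ H) ∈ A) :
    ((u * g : G) : G ⧸ H) ∈ A := by
  let σ : Equiv.Perm (G ⧸ H) := MulAction.toPerm u
  have hσ : ∀ x y, cayleyRel H S (σ x) (σ y) ↔ cayleyRel H S x y := cayleyRel_smul_iff u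
  have hσA : σ '' A = A := (hA.image σ hσ).eq_of_inter_nonempty hA
    (by rwa [Set.ncard_image_of_injective _ σ.injective])
    ⟨(u : G ⧸ H), ⟨_, h1, by simp [σ]⟩, hu⟩
  exact hσA ▸ Set.mem_image_of_mem σ hg

lemma IsAtomD.exists_subgroup_preimage_eq (hA : IsAtomD (cayleyRel H S) A)
    (hsmall : 2 * A.ncard ≤ Nat.card (G ⧸ H) - kappa (cayleyRel H S))
    (h1 : ((1 : G) : G ⧸ H) ∈ A) :
    ∃ K : Subgroup G, QuotientGroup.mk ⁻¹' A = K :=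
  let M : Submonoid G :=
    { carrier := QuotientGroup.mk ⁻¹' A
      one_mem' := h1
      mul_mem' := hA.mul_mem hsmall h1 }
  ⟨{ M with inv_mem' := M.inv_mem_of_finite }, rfl⟩

end CayleyCoset

section Counting

variable {G : Type*} [Group G] {H K : Subgroup G}

lemma ncard_eq_ncard_image_mk_mul_card {T : Set G} (hT : T * (K : Set G) = T) :
    T.ncard = (QuotientGroup.mk '' T : Set (G ⧸ K)).ncard * Nat.card K := by
  have hpre : QuotientGroup.mk ⁻¹' (QuotientGroup.mk '' T : Set (G ⧸ K)) = T := by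
    rw [QuotientGroup.preimage_image_mk_eq_mul, hT]
  rw [← Nat.card_coe_set_eq, ← Nat.card_coe_set_eq, ← hpre,
    Nat.card_congr (QuotientGroup.preimageMkEquivSubgroupProdSet K _), Nat.card_prod, hpre,
    mul_comm]

lemma card_dvd_ncard_of_mul_eq {T : Set G} (hT : (K : Set G) * T = T) :
    Nat.card K ∣ T.ncard := by
  have hTinv : T⁻¹ * (K : Set G) = T⁻¹ := by rw [← inv_coe_set, ← mul_inv_rev, hT]
  rw [← Set.ncard_inv, ncard_eq_ncard_image_mk_mul_card hTinv]
  exact dvd_mul_left _ _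

lemma ncard_image_mk_dvd [Finite G] (hHK : H ≤ K) {T : Set G} (hKT : (K : Set G) * T = T)
    (hTH : T * (H : Set G) = T) :
    (QuotientGroup.mk '' (K : Set G) : Set (G ⧸ H)).ncard ∣
      (QuotientGroup.mk '' T : Set (G ⧸ H)).ncard := by
  have hKH : (K : Set G) * (H : Set G) = K :=
    (Set.mul_subset_mul_left hHK).trans_eq (coe_mul_coe K) |>.antisymm
      (Set.subset_mul_left _ H.one_mem)
  have := card_dvd_ncard_of_mul_eq hKT
  rw [ncard_eq_ncard_image_mk_mul_card hTH, show Nat.card K = (K : Set G).ncard from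
    Nat.card_coe_set_eq _, ncard_eq_ncard_image_mk_mul_card hKH] at this
  exact Nat.dvd_of_mul_dvd_mul_right Nat.card_pos this

lemma dcoset_eq_doubleCoset (s : G) : dcoset H s = DoubleCoset.doubleCoset s H H := by
  ext; simp [dcoset, DoubleCoset.mem_doubleCoset]

lemma disjoint_image_mk_dcoset {s t : G} (h : dcoset H s ≠ dcoset H t) :
    Disjoint (QuotientGroup.mk '' dcoset H s : Set (G ⧸ H)) (QuotientGroup.mk '' dcoset H t) := by
  have hsat (a : G) :
      DoubleCoset.doubleCoset a H H * (H : Set G) = DoubleCoset.doubleCoset a H H := by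
    rw [DoubleCoset.doubleCoset, mul_assoc, coe_mul_coe]
  rw [← Set.disjoint_preimage_iff QuotientGroup.mk_surjective, dcoset_eq_doubleCoset,
    dcoset_eq_doubleCoset, QuotientGroup.preimage_image_mk_eq_mul,
    QuotientGroup.preimage_image_mk_eq_mul, hsat, hsat]
  rw [dcoset_eq_doubleCoset, dcoset_eq_doubleCoset] at h
  by_contra hst
  exact h (DoubleCoset.eq_of_not_disjoint hst)

lemma sum_dval_le_ncard [Finite G] {S₁ : Finset G}
    (hdc : ∀ s ∈ S₁, ∀ t ∈ S₁, s ≠ t → dcoset H s ≠ dcoset H t) {T : Set G}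
    (hT : ∀ s ∈ S₁, dcoset H s ⊆ T) :
    ∑ s ∈ S₁, dval H s ≤ (QuotientGroup.mk '' T : Set (G ⧸ H)).ncard := by
  simp only [dval]
  rw [← finsum_mem_coe_finset, ← (S₁ : Set G).toFinite.ncard_biUnion
    (fun _ _ => Set.toFinite _) (fun s hs t ht hst => disjoint_image_mk_dcoset (hdc s hs t ht hst))]
  exact Set.ncard_le_ncard (Set.iUnion₂_subset fun s hs => Set.image_mono (hT s hs))

end Counting

theorem stmt_9_general {G : Type*} [Group G] [Finite G] (H : Subgroup G) (S : Finset G)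
    (hdc : ∀ s ∈ S, ∀ t ∈ S, s ≠ t → dcoset H s ≠ dcoset H t)
    (hconn : SC (cayleyRel H (S : Set G)))
    (hatom : ∃ A : Set (G ⧸ H), IsAtomD (cayleyRel H (S : Set G)) A ∧
      2 * A.ncard ≤ Nat.card (G ⧸ H) - kappa (cayleyRel H (S : Set G)))
    (A₀ : Set (G ⧸ H)) (hA₀ : IsAtomD (cayleyRel H (S : Set G)) A₀)
    (hmem : ((1 : G) : G ⧸ H) ∈ A₀)
    (U : Set G) (hU : U = {g : G | (g : G ⧸ H) ∈ A₀})
    (S₁ : Finset G) (hS₁ : S₁ = S.filter (fun s => s ∉ U)) :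
    (Nout (cayleyRel H (S : Set G)) A₀).ncard =
      ((QuotientGroup.mk '' {x : G | ∃ u ∈ U, ∃ s ∈ S₁, ∃ h ∈ H, x = u * s * h} :
        Set (G ⧸ H))).ncard ∧
    max A₀.ncard (∑ s ∈ S₁, dval H s) ≤ (Nout (cayleyRel H (S : Set G)) A₀).ncard ∧
    A₀.ncard ∣ (Nout (cayleyRel H (S : Set G)) A₀).ncard := by
  obtain ⟨A, hA, hAsmall⟩ := hatom
  obtain ⟨K, hK⟩ := hA₀.exists_subgroup_preimage_eq (hA₀.ncard_eq hA ▸ hAsmall) hmem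
  have hHK := le_of_mk_preimage_eq hK
  have hUK : U = K := hU.trans hK
  subst hUK hS₁
  set W : Set G := (K : Set G) * ((S : Set G) \ K) * (H : Set G)
  have hN : Nout (cayleyRel H (S : Set G)) A₀ = QuotientGroup.mk '' W :=
    nout_cayleyRel_eq_image hK
  have hdvd : A₀.ncard ∣ (QuotientGroup.mk '' W : Set (G ⧸ H)).ncard := by
    rw [← Set.image_preimage_eq A₀ QuotientGroup.mk_surjective, hK]
    refine ncard_image_mk_dvd hHK ?_ ?_
    · simp only [W, ← mul_assoc, coe_mul_coe]
    · simp only [W, mul_assoc, coe_mul_coe]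
  have hpos : 0 < (QuotientGroup.mk '' W : Set (G ⧸ H)).ncard :=
    (Set.ncard_pos (Set.toFinite _)).2 (hN ▸ hA₀.1.nout_nonempty hconn)
  rw [hN]
  refine ⟨?_, max_le (Nat.le_of_dvd hpos hdvd) ?_, hdvd⟩
  · congr 1
    ext
    simp [W, Set.mem_mul, and_assoc]
  · refine sum_dval_le_ncard (fun s hs t ht => hdc s (Finset.mem_filter.1 hs).1 t
      (Finset.mem_filter.1 ht).1) fun s hs => ?_
    rintro _ ⟨h₁, hh₁, h₂, hh₂, rfl⟩
    exact Set.mul_mem_mul (Set.mul_mem_mul (hHK hh₁) (by simpa using hs)) hh₂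

/-- Let `A₀` be the atom of `𝒢(G,H,S)` containing the vertex `H`, let `⋃A₀` be the
union of the cosets in `A₀`, `S₀ = S ∩ ⋃A₀`, `S₁ = S ∖ S₀`. Then `|N(A₀)|` is the
number of left cosets of `H` contained in `(⋃A₀)S₁H`, it is at least
`max(|A₀|, d_{S₁})`, and `|A₀|` divides `|N(A₀)|`. -/
theorem stmt_9 {G : Type*} [Group G] [Finite G] (H : Subgroup G) (S : Finset G)
    (hSH : ∀ s ∈ S, s ∉ H)
    (hdc : ∀ s ∈ S, ∀ t ∈ S, s ≠ t → dcoset H s ≠ dcoset H t)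
    (hconn : SC (cayleyRel H (S : Set G)))
    (hnc : ∃ x y : G ⧸ H, x ≠ y ∧ ¬ cayleyRel H (S : Set G) x y)
    (hatom : ∃ A : Set (G ⧸ H), IsAtomD (cayleyRel H (S : Set G)) A ∧
      2 * A.ncard ≤ Nat.card (G ⧸ H) - kappa (cayleyRel H (S : Set G)))
    (A₀ : Set (G ⧸ H)) (hA₀ : IsAtomD (cayleyRel H (S : Set G)) A₀)
    (hmem : ((1 : G) : G ⧸ H) ∈ A₀)
    (U : Set G) (hU : U = {g : G | (g : G ⧸ H) ∈ A₀})
    (S₁ : Finset G) (hS₁ : S₁ = S.filter (fun s => s ∉ U)) :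
    (Nout (cayleyRel H (S : Set G)) A₀).ncard =
      ((QuotientGroup.mk '' {x : G | ∃ u ∈ U, ∃ s ∈ S₁, ∃ h ∈ H, x = u * s * h} :
        Set (G ⧸ H))).ncard ∧
    max A₀.ncard (∑ s ∈ S₁, dval H s) ≤ (Nout (cayleyRel H (S : Set G)) A₀).ncard ∧
    A₀.ncard ∣ (Nout (cayleyRel H (S : Set G)) A₀).ncard :=
  stmt_9_general H S hdc hconn hatom A₀ hA₀ hmem U hU S₁ hS₁
end
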